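/- Any stable configuration K* reachable from K (K σ = k ≥ 0, zero elsewhere) under flow-firing with distinguished face σ equals the Aztec pyramid: K* σ = k and K* τ = max(0, k − dist(σ,τ) + 1) for all τ ≠ σ. -/
import Mathlib


def Nb (a b : ℤ × ℤ) : Prop := |a.1 - b.1| + |a.2 - b.2| = 1

def FinSupp (F : ℤ × ℤ → ℤ) : Prop := {τ | F τ ≠ 0}.Finite

/-- A firing step: neighbors `a`, `b` with `F a ≥ F b + 2`; `F a` decreases by 1 and
`F b` increases by 1. -/
def Step (F F' : ℤ × ℤ → ℤ) : Prop :=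
  ∃ a b : ℤ × ℤ, Nb a b ∧ F b + 2 ≤ F a ∧
    F' = Function.update (Function.update F a (F a - 1)) b (F b + 1)

/-- Manhattan distance between faces. -/
def mdist (a b : ℤ × ℤ) : ℤ := |a.1 - b.1| + |a.2 - b.2|

/-- Firing step for the process with distinguished face `σ`. -/
def StepD (σ : ℤ × ℤ) (F F' : ℤ × ℤ → ℤ) : Prop :=
  (∃ a b : ℤ × ℤ, a ≠ σ ∧ b ≠ σ ∧ Nb a b ∧ F b + 2 ≤ F a ∧
      F' = Function.update (Function.update F a (F a - 1)) b (F b + 1)) ∨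
  (∃ a : ℤ × ℤ, Nb a σ ∧ F a < F σ ∧ F' = Function.update F a (F a + 1)) ∨
  (∃ a : ℤ × ℤ, Nb a σ ∧ F σ < F a ∧ F' = Function.update F a (F a - 1))

/-- Initial configuration: `k` at `σ`, zero elsewhere. -/
def Kinit (σ : ℤ × ℤ) (k : ℤ) : ℤ × ℤ → ℤ := fun τ => if τ = σ then k else 0

/-- The "Aztec pyramid" configuration. -/
def Kbullet (σ : ℤ × ℤ) (k : ℤ) : ℤ × ℤ → ℤ :=
  fun τ => if τ = σ then k else max 0 (k - mdist σ τ + 1)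

lemma nb_symm {a b : ℤ × ℤ} (h : Nb a b) : Nb b a := by
  unfold Nb at *
  rw [abs_sub_comm b.1, abs_sub_comm b.2]
  exact h

lemma nb_ne {a b : ℤ × ℤ} (h : Nb a b) : a ≠ b := by
  rintro rfl
  simp [Nb] at h

lemma mdist_comm (a b : ℤ × ℤ) : mdist a b = mdist b a := by
  unfold mdist
  rw [abs_sub_comm, abs_sub_comm a.2]

lemma mdist_nb {a b : ℤ × ℤ} (h : Nb a b) : mdist a b = 1 := h

lemma mdist_nonneg (a b : ℤ × ℤ) : 0 ≤ mdist a b :=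
  add_nonneg (abs_nonneg _) (abs_nonneg _)

lemma mdist_eq_zero {a b : ℤ × ℤ} (h : mdist a b = 0) : a = b := by
  unfold mdist at h
  have h1 := abs_nonneg (a.1 - b.1)
  have h2 := abs_nonneg (a.2 - b.2)
  have e1 : |a.1 - b.1| = 0 := by omega
  have e2 : |a.2 - b.2| = 0 := by omega
  rw [abs_eq_zero, sub_eq_zero] at e1 e2
  exact Prod.ext e1 e2

lemma mdist_tri (a b c : ℤ × ℤ) : mdist a c ≤ mdist a b + mdist b c := by
  unfold mdist
  have h1 := abs_sub_le a.1 b.1 c.1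
  have h2 := abs_sub_le a.2 b.2 c.2
  linarith

/-- The invariant preserved by the process. -/
def InvD (σ : ℤ × ℤ) (k : ℤ) (F : ℤ × ℤ → ℤ) : Prop :=
  F σ = k ∧ ∀ τ, 0 ≤ F τ ∧ F τ ≤ Kbullet σ k τ

lemma invD_step (σ : ℤ × ℤ) (k : ℤ) (hk : 0 ≤ k) {F F' : ℤ × ℤ → ℤ}
    (hs : StepD σ F F') (hI : InvD σ k F) : InvD σ k F' := by
  obtain ⟨hσ, hb⟩ := hI
  rcases hs with ⟨a, b, ha, hbne, hnb, hge, rfl⟩ | ⟨a, hnb, hlt, rfl⟩ | ⟨a, hnb, hlt, rfl⟩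
  · -- firing between two non-σ faces
    have hab : a ≠ b := nb_ne hnb
    have hda : mdist σ a ≤ mdist σ b + 1 := by
      have := mdist_tri σ b a
      have := mdist_nb (nb_symm hnb)
      omega
    have hdb : mdist σ b ≤ mdist σ a + 1 := by
      have := mdist_tri σ a b
      have := mdist_nb hnb
      omega
    constructor
    · rw [Function.update_of_ne (Ne.symm hbne), Function.update_of_ne (Ne.symm ha), hσ]
    · intro τ
      by_cases hτb : τ = b
      · rw [hτb, Function.update_self]
        have h1 := hb a
        have h2 := hb b
        simp only [Kbullet, if_neg ha, if_neg hbne] at h1 h2 ⊢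
        omega
      · rw [Function.update_of_ne hτb]
        by_cases hτa : τ = a
        · rw [hτa, Function.update_self]
          have h1 := hb a
          have h2 := hb b
          omega
        · rw [Function.update_of_ne hτa]
          exact hb τ
  · -- σ pushes to a neighbor
    have ha : a ≠ σ := nb_ne hnb
    have hda : mdist σ a = 1 := by rw [mdist_comm]; exact mdist_nb hnb
    constructor
    · rw [Function.update_of_ne (Ne.symm ha), hσ]
    · intro τ
      by_cases hτa : τ = a
      · rw [hτa, Function.update_self]
        have h1 := hb a
        simp only [Kbullet, if_neg ha] at h1 ⊢
        rw [hσ] at hlt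
        omega
      · rw [Function.update_of_ne hτa]
        exact hb τ
  · -- σ pulls from a neighbor
    have ha : a ≠ σ := nb_ne hnb
    constructor
    · rw [Function.update_of_ne (Ne.symm ha), hσ]
    · intro τ
      by_cases hτa : τ = a
      · rw [hτa, Function.update_self]
        have h1 := hb a
        rw [hσ] at hlt
        omega
      · rw [Function.update_of_ne hτa]
        exact hb τ

lemma toward (σ τ : ℤ × ℤ) (h : τ ≠ σ) :
    ∃ τ' : ℤ × ℤ, Nb τ τ' ∧ mdist σ τ' = mdist σ τ - 1 := by
  by_cases h1 : τ.1 = σ.1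
  · have h2 : τ.2 ≠ σ.2 := fun h2 => h (Prod.ext h1 h2)
    rcases h2.lt_or_gt with hlt | hlt
    · refine ⟨(τ.1, τ.2 + 1), ?_, ?_⟩
      · show |τ.1 - τ.1| + |τ.2 - (τ.2 + 1)| = 1
        rw [show τ.1 - τ.1 = 0 by ring, show τ.2 - (τ.2 + 1) = -1 by ring]
        norm_num
      · show |σ.1 - τ.1| + |σ.2 - (τ.2 + 1)| = (|σ.1 - τ.1| + |σ.2 - τ.2|) - 1
        rw [abs_of_nonneg (show (0:ℤ) ≤ σ.2 - (τ.2 + 1) by omega),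
          abs_of_nonneg (show (0:ℤ) ≤ σ.2 - τ.2 by omega)]
        ring
    · refine ⟨(τ.1, τ.2 - 1), ?_, ?_⟩
      · show |τ.1 - τ.1| + |τ.2 - (τ.2 - 1)| = 1
        rw [show τ.1 - τ.1 = 0 by ring, show τ.2 - (τ.2 - 1) = 1 by ring]
        norm_num
      · show |σ.1 - τ.1| + |σ.2 - (τ.2 - 1)| = (|σ.1 - τ.1| + |σ.2 - τ.2|) - 1
        rw [abs_of_nonpos (show σ.2 - (τ.2 - 1) ≤ (0:ℤ) by omega),
          abs_of_nonpos (show σ.2 - τ.2 ≤ (0:ℤ) by omega)]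
        ring
  · rcases (Ne.lt_or_gt h1) with hlt | hlt
    · refine ⟨(τ.1 + 1, τ.2), ?_, ?_⟩
      · show |τ.1 - (τ.1 + 1)| + |τ.2 - τ.2| = 1
        rw [show τ.1 - (τ.1 + 1) = -1 by ring, show τ.2 - τ.2 = 0 by ring]
        norm_num
      · show |σ.1 - (τ.1 + 1)| + |σ.2 - τ.2| = (|σ.1 - τ.1| + |σ.2 - τ.2|) - 1
        rw [abs_of_nonneg (show (0:ℤ) ≤ σ.1 - (τ.1 + 1) by omega),
          abs_of_nonneg (show (0:ℤ) ≤ σ.1 - τ.1 by omega)]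
        ring
    · refine ⟨(τ.1 - 1, τ.2), ?_, ?_⟩
      · show |τ.1 - (τ.1 - 1)| + |τ.2 - τ.2| = 1
        rw [show τ.1 - (τ.1 - 1) = 1 by ring, show τ.2 - τ.2 = 0 by ring]
        norm_num
      · show |σ.1 - (τ.1 - 1)| + |σ.2 - τ.2| = (|σ.1 - τ.1| + |σ.2 - τ.2|) - 1
        rw [abs_of_nonpos (show σ.1 - (τ.1 - 1) ≤ (0:ℤ) by omega),
          abs_of_nonpos (show σ.1 - τ.1 ≤ (0:ℤ) by omega)]
        ring

/-- Any stable configuration reachable from `Kinit σ k` is the Aztec pyramid. -/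
theorem stmt10 (σ : ℤ × ℤ) (k : ℤ) (hk : 0 ≤ k) (Kstar : ℤ × ℤ → ℤ)
    (hreach : Relation.ReflTransGen (StepD σ) (Kinit σ k) Kstar)
    (hstable : ¬ ∃ F', StepD σ Kstar F') :
    Kstar σ = k ∧ ∀ τ : ℤ × ℤ, τ ≠ σ → Kstar τ = max 0 (k - mdist σ τ + 1) := by
  -- the invariant holds along the trajectory
  have hInv : InvD σ k Kstar := by
    clear hstable
    induction hreach with
    | refl =>
      constructor
      · simp [Kinit]
      · intro τ
        unfold Kinit Kbullet
        by_cases hτ : τ = σ <;> simp [hτ] <;> omega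
    | tail _ hstep ih => exact invD_step σ k hk hstep ih
  push_neg at hstable
  -- consequences of stability
  have hnbσ : ∀ a, Nb a σ → Kstar a = k := by
    intro a hnb
    rcases lt_trichotomy (Kstar a) (Kstar σ) with h | h | h
    · exact absurd (Or.inr (Or.inl ⟨a, hnb, h, rfl⟩)) (hstable _)
    · rw [h, hInv.1]
    · exact absurd (Or.inr (Or.inr ⟨a, hnb, h, rfl⟩)) (hstable _)
  have hlip : ∀ a b, a ≠ σ → b ≠ σ → Nb a b → Kstar a ≤ Kstar b + 1 := by
    intro a b ha hb hnb
    by_contra h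
    exact hstable _ (Or.inl ⟨a, b, ha, hb, hnb, by omega, rfl⟩)
  have key : ∀ n : ℕ, ∀ τ : ℤ × ℤ, τ ≠ σ → mdist σ τ = n →
      Kstar τ = max 0 (k - mdist σ τ + 1) := by
    intro n
    induction n using Nat.strong_induction_on with
    | _ n ih =>
      intro τ hτ hd
      match n with
      | 0 => exact absurd (mdist_eq_zero (by exact_mod_cast hd)).symm hτ
      | 1 =>
        have hnb : Nb τ σ := by
          show |τ.1 - σ.1| + |τ.2 - σ.2| = 1
          have : |σ.1 - τ.1| + |σ.2 - τ.2| = 1 := by exact_mod_cast hd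
          rw [abs_sub_comm τ.1, abs_sub_comm τ.2]
          exact this
        rw [hnbσ τ hnb, hd]
        push_cast
        omega
      | (m + 2) =>
        obtain ⟨τ', hnb, hd'⟩ := toward σ τ hτ
        have hτ' : τ' ≠ σ := by
          intro h
          rw [h] at hd'
          have : mdist σ σ = 0 := by unfold mdist; simp
          omega
        have hdn : mdist σ τ' = ((m + 1 : ℕ) : ℤ) := by push_cast; omega
        have ihτ' := ih (m + 1) (by omega) τ' hτ' hdn
        have h1 := hlip τ τ' hτ hτ' hnb
        have h2 := hlip τ' τ hτ' hτ (nb_symm hnb)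
        have hub := (hInv.2 τ).2
        have hnn := (hInv.2 τ).1
        unfold Kbullet at hub
        rw [if_neg hτ] at hub
        omega
  refine ⟨hInv.1, fun τ hτ => key (mdist σ τ).toNat τ hτ ?_⟩
  rw [Int.toNat_of_nonneg (mdist_nonneg σ τ)]
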